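/- (Christoffel–Darboux formula for OPUC.) Let μ be a nontrivial probability measure on the unit circle with orthonormal polynomials φ_n. Then for all z, ζ ∈ ℂ and all n ≥ 0: (1 − z·conj(ζ))·∑_{j=0}^n conj(φ_j(ζ))·φ_j(z) = conj(φ_{n+1}^*(ζ))·φ_{n+1}^*(z) − conj(φ_{n+1}(ζ))·φ_{n+1}(z). -/

import Mathlib

open MeasureTheory Polynomial Filter

noncomputable section

/-- A nontrivial probability measure on the unit circle: a probability measure on `ℂ`
supported on `{z : ‖z‖ = 1}` that is not concentrated on any finite set
(equivalently, its support is infinite). -/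
structure IsNontrivialOnCircle (μ : Measure ℂ) : Prop where
  prob : IsProbabilityMeasure μ
  onCircle : μ {z : ℂ | ‖z‖ = 1}ᶜ = 0
  infiniteSupport : ∀ s : Finset ℂ, μ ((↑s : Set ℂ)ᶜ) ≠ 0

/-- `Φ` is the family of monic orthogonal polynomials for `μ`: each `Φ n` is monic of
degree `n` and orthogonal in `L²(∂𝔻, dμ)` to `z^j` for `j = 0, …, n-1`. -/
def IsMonicOPUC (μ : Measure ℂ) (Φ : ℕ → Polynomial ℂ) : Prop :=
  ∀ n : ℕ, ((Φ n).Monic ∧ (Φ n).natDegree = n) ∧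
    ∀ j < n, ∫ z, (starRingEnd ℂ) z ^ j * (Φ n).eval z ∂μ = 0

/-- Verblunsky coefficients: `α n = -conj (Φ (n+1) (0))`. -/
def verblunsky (Φ : ℕ → Polynomial ℂ) (n : ℕ) : ℂ :=
  - (starRingEnd ℂ) ((Φ (n + 1)).eval 0)

/-- Squared `L²(dμ)` norm of a polynomial. -/
def polyNormSq (μ : Measure ℂ) (P : Polynomial ℂ) : ℝ :=
  ∫ z, ‖P.eval z‖ ^ 2 ∂μ

/-- Orthonormal polynomial: `φ = Φ / ‖Φ‖_{L²(dμ)}`. -/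
def orthonormalize (μ : Measure ℂ) (P : Polynomial ℂ) : Polynomial ℂ :=
  Polynomial.C ((Real.sqrt (polyNormSq μ P) : ℂ))⁻¹ * P

/-- The reversed polynomial `P^{*,n}(z) = z^n conj (P (1/conj z))`. -/
def revStar (n : ℕ) (P : Polynomial ℂ) : Polynomial ℂ :=
  ∑ j ∈ Finset.range (n + 1),
    Polynomial.C ((starRingEnd ℂ) (P.coeff (n - j))) * Polynomial.X ^ j

/-!
Induction on `n`. By the Szegő recursion `Φ_{n+1} = z Φ_n - conj α_n Φ_n^*`, its reversal
`Φ_{n+1}^* = Φ_n^* - α_n z Φ_n` and `‖Φ_{n+1}‖² = (1 - |α_n|²) ‖Φ_n‖²`, the right-hand side grows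
by exactly `(1 - z conj ζ) conj (φ_n ζ) φ_n z` from `n` to `n + 1`, and it vanishes for `n = 0`.
The recursion holds because `Φ_{n+1} - z Φ_n + conj α_n Φ_n^*` has degree at most `n`, vanishes at
`0` and is orthogonal to `z, …, z^n` (multiplication by `z` and `P ↦ P^*` are isometries of
`L²(μ)` on the circle), so it is orthogonal to itself.
-/

open ComplexConjugate

variable {μ : Measure ℂ}

lemma mul_conj_eq_one_of_norm_eq_one {z : ℂ} (hz : ‖z‖ = 1) : z * conj z = 1 := by
  rw [Complex.mul_conj', hz]; norm_num

def polyInner (μ : Measure ℂ) (P Q : ℂ[X]) : ℂ :=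
  ∫ z, conj (P.eval z) * Q.eval z ∂μ

lemma conj_polyInner (P Q : ℂ[X]) : conj (polyInner μ P Q) = polyInner μ Q P := by
  rw [polyInner, ← integral_conj]
  simp [polyInner, mul_comm]

lemma polyInner_C_mul_left (c : ℂ) (P Q : ℂ[X]) :
    polyInner μ (C c * P) Q = conj c * polyInner μ P Q := by
  simp only [polyInner, eval_mul, eval_C, map_mul, mul_assoc, integral_const_mul]

lemma polyInner_C_mul_right (c : ℂ) (P Q : ℂ[X]) :
    polyInner μ P (C c * Q) = c * polyInner μ P Q := by
  simp only [polyInner, eval_mul, eval_C, mul_left_comm _ c, integral_const_mul]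

lemma polyInner_self (P : ℂ[X]) : polyInner μ P P = polyNormSq μ P := by
  rw [polyNormSq, ← integral_complex_ofReal]
  simp [polyInner, Complex.conj_mul']

section CircleMeasure

variable (hμ : IsNontrivialOnCircle μ)
include hμ

lemma IsNontrivialOnCircle.ae_norm_eq_one : ∀ᵐ z ∂μ, ‖z‖ = 1 :=
  ae_iff.2 hμ.onCircle

lemma IsNontrivialOnCircle.integrable_of_continuous {E : Type*} [NormedAddCommGroup E]
    {f : ℂ → E} (hf : Continuous f) : Integrable f μ := by
  have := hμ.prob
  have hK : IntegrableOn f (Metric.sphere 0 1) μ :=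
    hf.continuousOn.integrableOn_compact (isCompact_sphere 0 1)
  rwa [IntegrableOn, Measure.restrict_eq_self_of_ae_mem] at hK
  filter_upwards [hμ.ae_norm_eq_one] with z hz
  simpa [mem_sphere_iff_norm] using hz

lemma integrable_polyInner (P Q : ℂ[X]) :
    Integrable (fun z => conj (P.eval z) * Q.eval z) μ :=
  hμ.integrable_of_continuous ((Complex.continuous_conj.comp P.continuous).mul Q.continuous)

lemma polyInner_add_left (P Q R : ℂ[X]) :
    polyInner μ (P + Q) R = polyInner μ P R + polyInner μ Q R := by
  simp only [polyInner, eval_add, map_add, add_mul]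
  exact integral_add (integrable_polyInner hμ P R) (integrable_polyInner hμ Q R)

lemma polyInner_add_right (P Q R : ℂ[X]) :
    polyInner μ P (Q + R) = polyInner μ P Q + polyInner μ P R := by
  simp only [polyInner, eval_add, mul_add]
  exact integral_add (integrable_polyInner hμ P Q) (integrable_polyInner hμ P R)

lemma polyInner_sub_right (P Q R : ℂ[X]) :
    polyInner μ P (Q - R) = polyInner μ P Q - polyInner μ P R := by
  simp only [polyInner, eval_sub, mul_sub]
  exact integral_sub (integrable_polyInner hμ P Q) (integrable_polyInner hμ P R)

lemma polyInner_sum_left {ι : Type*} (s : Finset ι) (P : ι → ℂ[X]) (Q : ℂ[X]) :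
    polyInner μ (∑ i ∈ s, P i) Q = ∑ i ∈ s, polyInner μ (P i) Q := by
  simp only [polyInner, eval_finsetSum, map_sum, Finset.sum_mul]
  exact integral_finsetSum s fun i _ => integrable_polyInner hμ (P i) Q

lemma polyInner_eq_sum_support (P Q : ℂ[X]) :
    polyInner μ P Q = ∑ j ∈ P.support, conj (P.coeff j) * polyInner μ (X ^ j) Q := by
  conv_lhs => rw [P.as_sum_support_C_mul_X_pow]
  simp only [polyInner_sum_left hμ, polyInner_C_mul_left]

lemma polyNormSq_pos {P : ℂ[X]} (hP : P ≠ 0) : 0 < polyNormSq μ P := by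
  refine (integral_nonneg fun z => by positivity).lt_of_ne' fun h => ?_
  have hzero : ∀ᵐ z ∂μ, P.eval z = 0 := by
    filter_upwards [(integral_eq_zero_iff_of_nonneg (fun z => by positivity)
      (hμ.integrable_of_continuous (by fun_prop))).1 h] with z hz
    simpa using hz
  refine hμ.infiniteSupport P.roots.toFinset (measure_mono_null (fun z hz => ?_) (ae_iff.1 hzero))
  simp_all [Set.mem_compl_iff, mem_roots hP]

lemma eq_zero_of_polyInner_X_pow_eq_zero {P : ℂ[X]}
    (h : ∀ j ∈ P.support, polyInner μ (X ^ j) P = 0) : P = 0 := by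
  by_contra hP
  have hself : polyInner μ P P = 0 := by
    rw [polyInner_eq_sum_support hμ]
    exact Finset.sum_eq_zero fun j hj => by rw [h j hj, mul_zero]
  rw [polyInner_self] at hself
  exact (polyNormSq_pos hμ hP).ne' (by exact_mod_cast hself)

end CircleMeasure

lemma revStar_coeff (n k : ℕ) (P : ℂ[X]) :
    (revStar n P).coeff k = if k ≤ n then conj (P.coeff (n - k)) else 0 := by
  simp only [revStar, finsetSum_coeff, coeff_C_mul, coeff_X_pow, mul_ite, mul_one, mul_zero,
    Finset.sum_ite_eq, Finset.mem_range, Nat.lt_succ_iff]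

lemma revStar_natDegree_le (n : ℕ) (P : ℂ[X]) : (revStar n P).natDegree ≤ n :=
  natDegree_le_iff_coeff_eq_zero.2 fun k hk => by simp [revStar_coeff, Nat.not_le.2 hk]

lemma revStar_zero (P : ℂ[X]) : revStar 0 P = C (conj (P.coeff 0)) := by
  simp [revStar]

lemma revStar_sub (n : ℕ) (P Q : ℂ[X]) : revStar n (P - Q) = revStar n P - revStar n Q := by
  ext k; simp only [revStar_coeff, coeff_sub, map_sub]; split_ifs <;> simp

lemma revStar_C_mul (n : ℕ) (c : ℂ) (P : ℂ[X]) :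
    revStar n (C c * P) = C (conj c) * revStar n P := by
  ext k; simp only [revStar_coeff, coeff_C_mul, map_mul]; split_ifs <;> simp

lemma revStar_X_mul (n : ℕ) (P : ℂ[X]) : revStar (n + 1) (X * P) = revStar n P := by
  ext k
  simp only [revStar_coeff]
  split_ifs
  · rw [show n + 1 - k = n - k + 1 by omega, coeff_X_mul]
  · simp [show k = n + 1 by omega]
  · omega
  · rfl

lemma revStar_revStar {n : ℕ} {P : ℂ[X]} (hP : P.natDegree ≤ n) :
    revStar (n + 1) (revStar n P) = X * P := by
  ext k
  rcases k with _ | k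
  · simp [revStar_coeff]
  · simp only [revStar_coeff, coeff_X_mul]
    split_ifs
    · rw [show n - (n + 1 - (k + 1)) = k by omega, Complex.conj_conj]
    · omega
    · exact (coeff_eq_zero_of_natDegree_lt (by omega)).symm

lemma revStar_X_pow {n j : ℕ} (hj : j ≤ n) : revStar n (X ^ (n - j)) = X ^ j := by
  ext k
  simp only [revStar_coeff, coeff_X_pow]
  split_ifs <;> simp <;> omega

lemma eval_revStar_of_norm_eq_one {n : ℕ} {P : ℂ[X]} (hP : P.natDegree ≤ n) {z : ℂ}
    (hz : ‖z‖ = 1) : (revStar n P).eval z = z ^ n * conj (P.eval z) := by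
  rw [revStar, eval_finsetSum, eval_eq_sum_range' (Nat.lt_succ_of_le hP), map_sum,
    Finset.mul_sum, ← Finset.sum_range_reflect]
  refine Finset.sum_congr rfl fun j hj => ?_
  obtain ⟨k, rfl⟩ := Nat.exists_eq_add_of_le (Nat.lt_succ_iff.1 (Finset.mem_range.1 hj))
  simp only [eval_mul, eval_C, eval_pow, eval_X, map_mul, map_pow, Nat.add_sub_cancel_left,
    Nat.add_sub_cancel, pow_add]
  have hpow : (z * conj z) ^ j = 1 := by rw [mul_conj_eq_one_of_norm_eq_one hz, one_pow]
  linear_combination -(conj (P.coeff j) * z ^ k) * hpow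

section Isometries

variable (hμ : IsNontrivialOnCircle μ)
include hμ

lemma polyInner_X_mul (P Q : ℂ[X]) : polyInner μ (X * P) (X * Q) = polyInner μ P Q := by
  refine integral_congr_ae ?_
  filter_upwards [hμ.ae_norm_eq_one] with z hz
  simp only [eval_mul, eval_X, map_mul]
  linear_combination (conj (P.eval z) * Q.eval z) * mul_conj_eq_one_of_norm_eq_one hz

lemma polyInner_revStar_revStar {n : ℕ} {P Q : ℂ[X]} (hP : P.natDegree ≤ n)
    (hQ : Q.natDegree ≤ n) :
    polyInner μ (revStar n P) (revStar n Q) = polyInner μ Q P := by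
  refine integral_congr_ae ?_
  filter_upwards [hμ.ae_norm_eq_one] with z hz
  have hpow : (z * conj z) ^ n = 1 := by rw [mul_conj_eq_one_of_norm_eq_one hz, one_pow]
  simp only [eval_revStar_of_norm_eq_one hP hz, eval_revStar_of_norm_eq_one hQ hz, map_mul,
    map_pow, Complex.conj_conj]
  linear_combination (P.eval z * conj (Q.eval z)) * hpow

end Isometries

lemma orthonormalize_eq_C_mul (P : ℂ[X]) :
    orthonormalize μ P = C (((√(polyNormSq μ P))⁻¹ : ℝ) : ℂ) * P := by
  rw [orthonormalize, Complex.ofReal_inv]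

def christoffelDarbouxRHS (μ : Measure ℂ) (Φ : ℕ → ℂ[X]) (z ζ : ℂ) (n : ℕ) : ℂ :=
  conj ((revStar n (orthonormalize μ (Φ n))).eval ζ) * (revStar n (orthonormalize μ (Φ n))).eval z
    - conj ((orthonormalize μ (Φ n)).eval ζ) * (orthonormalize μ (Φ n)).eval z

section OrthogonalPolynomials

variable {Φ : ℕ → ℂ[X]} (hΦ : IsMonicOPUC μ Φ)
include hΦ

lemma IsMonicOPUC.isMonicOfDegree (n : ℕ) : IsMonicOfDegree (Φ n) n :=
  ⟨(hΦ n).1.2, (hΦ n).1.1⟩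

lemma IsMonicOPUC.polyInner_X_pow_eq_zero {j n : ℕ} (hj : j < n) :
    polyInner μ (X ^ j) (Φ n) = 0 := by
  simpa [polyInner] using (hΦ n).2 j hj

lemma IsMonicOPUC.polyInner_eq_zero_of_natDegree_lt (hμ : IsNontrivialOnCircle μ) {n : ℕ}
    {P : ℂ[X]} (hP : P.natDegree < n) : polyInner μ P (Φ n) = 0 := by
  rw [polyInner_eq_sum_support hμ]
  refine Finset.sum_eq_zero fun j hj => ?_
  rw [hΦ.polyInner_X_pow_eq_zero ((le_natDegree_of_mem_supp j hj).trans_lt hP), mul_zero]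

lemma IsMonicOPUC.revStar_coeff_zero (n : ℕ) : (revStar n (Φ n)).coeff 0 = 1 := by
  have hlead := (hΦ n).1.1.coeff_natDegree
  rw [(hΦ n).1.2] at hlead
  simp [revStar_coeff, hlead]

lemma IsMonicOPUC.polyInner_X_pow_revStar (hμ : IsNontrivialOnCircle μ) {j n : ℕ}
    (hj : 0 < j) (hjn : j ≤ n) : polyInner μ (X ^ j) (revStar n (Φ n)) = 0 := by
  rw [← revStar_X_pow hjn,
    polyInner_revStar_revStar hμ ((natDegree_X_pow_le _).trans (Nat.sub_le _ _)) (hΦ n).1.2.le,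
    ← conj_polyInner, hΦ.polyInner_X_pow_eq_zero (by omega), map_zero]

theorem IsMonicOPUC.szego_recursion (hμ : IsNontrivialOnCircle μ) (n : ℕ) :
    Φ (n + 1) = X * Φ n - C (conj (verblunsky Φ n)) * revStar n (Φ n) := by
  set R := Φ (n + 1) - X * Φ n + C (conj (verblunsky Φ n)) * revStar n (Φ n)
  have hXΦ : IsMonicOfDegree (X * Φ n) (n + 1) := by
    simpa [add_comm] using (isMonicOfDegree_X (R := ℂ)).mul (hΦ.isMonicOfDegree n)
  have hRdeg : R.natDegree ≤ n := natDegree_add_le_of_degree_le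
    (Nat.lt_succ_iff.1 ((hΦ.isMonicOfDegree _).natDegree_sub_lt n.succ_ne_zero hXΦ))
    ((natDegree_C_mul_le _ _).trans (revStar_natDegree_le _ _))
  have hR0 : R.coeff 0 = 0 := by
    rw [coeff_add, coeff_sub, coeff_C_mul, hΦ.revStar_coeff_zero, mul_coeff_zero, coeff_X_zero,
      verblunsky, map_neg, Complex.conj_conj, ← coeff_zero_eq_eval_zero]
    ring
  suffices R = 0 by linear_combination this
  refine eq_zero_of_polyInner_X_pow_eq_zero hμ fun j hj => ?_
  have hjn : j ≤ n := (le_natDegree_of_mem_supp j hj).trans hRdeg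
  have hj0 : j ≠ 0 := by
    rintro rfl
    exact mem_support_iff.1 hj hR0
  obtain ⟨i, rfl⟩ := Nat.exists_eq_succ_of_ne_zero hj0
  rw [polyInner_add_right hμ, polyInner_sub_right hμ, polyInner_C_mul_right,
    hΦ.polyInner_X_pow_eq_zero (by omega), hΦ.polyInner_X_pow_revStar hμ i.succ_pos hjn,
    pow_succ', polyInner_X_mul hμ, hΦ.polyInner_X_pow_eq_zero (by omega)]
  ring

theorem IsMonicOPUC.revStar_szego_recursion (hμ : IsNontrivialOnCircle μ) (n : ℕ) :
    revStar (n + 1) (Φ (n + 1)) = revStar n (Φ n) - C (verblunsky Φ n) * (X * Φ n) := by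
  conv_lhs => rw [hΦ.szego_recursion hμ n]
  rw [revStar_sub, revStar_X_mul, revStar_C_mul, revStar_revStar (hΦ n).1.2.le,
    Complex.conj_conj]

theorem IsMonicOPUC.polyNormSq_succ (hμ : IsNontrivialOnCircle μ) (n : ℕ) :
    polyNormSq μ (Φ (n + 1)) = (1 - Complex.normSq (verblunsky Φ n)) * polyNormSq μ (Φ n) := by
  set α := verblunsky Φ n
  set Q := revStar n (Φ n)
  have hXΦ : X * Φ n = Φ (n + 1) + C (conj α) * Q := by
    rw [hΦ.szego_recursion hμ n]; ring
  have hQΦ : polyInner μ Q (Φ (n + 1)) = 0 :=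
    hΦ.polyInner_eq_zero_of_natDegree_lt hμ (Nat.lt_succ_of_le (revStar_natDegree_le n _))
  have hΦQ : polyInner μ (Φ (n + 1)) Q = 0 := by rw [← conj_polyInner, hQΦ, map_zero]
  have hQQ : polyInner μ Q Q = polyInner μ (Φ n) (Φ n) :=
    polyInner_revStar_revStar hμ (hΦ n).1.2.le (hΦ n).1.2.le
  have hnorm := polyInner_X_mul hμ (Φ n) (Φ n)
  rw [hXΦ] at hnorm
  simp only [polyInner_add_left hμ, polyInner_add_right hμ, polyInner_C_mul_left,
    polyInner_C_mul_right, hQΦ, hΦQ, hQQ, Complex.conj_conj] at hnorm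
  apply Complex.ofReal_injective
  rw [Complex.ofReal_mul, Complex.ofReal_sub, Complex.ofReal_one, Complex.normSq_eq_conj_mul_self,
    ← polyInner_self, ← polyInner_self]
  linear_combination hnorm

lemma IsMonicOPUC.normSq_verblunsky_lt_one (hμ : IsNontrivialOnCircle μ) (n : ℕ) :
    Complex.normSq (verblunsky Φ n) < 1 := by
  have h := polyNormSq_pos hμ (hΦ.isMonicOfDegree (n + 1)).ne_zero
  rw [hΦ.polyNormSq_succ hμ] at h
  linarith [pos_of_mul_pos_left h (polyNormSq_pos hμ (hΦ.isMonicOfDegree n).ne_zero).le]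

lemma IsMonicOPUC.inv_sqrt_polyNormSq_succ (hμ : IsNontrivialOnCircle μ) (n : ℕ) :
    (√(polyNormSq μ (Φ (n + 1))))⁻¹ ^ 2 * (1 - Complex.normSq (verblunsky Φ n)) =
      (√(polyNormSq μ (Φ n)))⁻¹ ^ 2 := by
  have hα := hΦ.normSq_verblunsky_lt_one hμ n
  have hN := polyNormSq_pos hμ (hΦ.isMonicOfDegree n).ne_zero
  rw [inv_pow, inv_pow, Real.sq_sqrt (polyNormSq_pos hμ (hΦ.isMonicOfDegree _).ne_zero).le,
    Real.sq_sqrt hN.le, hΦ.polyNormSq_succ hμ]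
  field_simp [(sub_pos.2 hα).ne']

lemma IsMonicOPUC.christoffelDarbouxRHS_zero (z ζ : ℂ) :
    christoffelDarbouxRHS μ Φ z ζ 0 = 0 := by
  rw [christoffelDarbouxRHS, isMonicOfDegree_zero_iff.1 (hΦ.isMonicOfDegree 0),
    orthonormalize_eq_C_mul, mul_one, revStar_zero]
  simp

lemma IsMonicOPUC.christoffelDarbouxRHS_succ (hμ : IsNontrivialOnCircle μ) (z ζ : ℂ) (n : ℕ) :
    christoffelDarbouxRHS μ Φ z ζ (n + 1) = christoffelDarbouxRHS μ Φ z ζ n +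
      (1 - z * conj ζ) *
        (conj ((orthonormalize μ (Φ n)).eval ζ) * (orthonormalize μ (Φ n)).eval z) := by
  have hκ := hΦ.inv_sqrt_polyNormSq_succ hμ n
  simp only [christoffelDarbouxRHS, orthonormalize_eq_C_mul, revStar_C_mul, Complex.conj_ofReal,
    hΦ.revStar_szego_recursion hμ]
  generalize (√(polyNormSq μ (Φ n)))⁻¹ = κ at hκ ⊢
  generalize (√(polyNormSq μ (Φ (n + 1))))⁻¹ = κ' at hκ ⊢
  rw [hΦ.szego_recursion hμ n]
  replace hκ : (κ' : ℂ) ^ 2 * (1 - conj (verblunsky Φ n) * verblunsky Φ n) = (κ : ℂ) ^ 2 := by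
    rw [← Complex.normSq_eq_conj_mul_self]; exact_mod_cast hκ
  simp only [eval_sub, eval_mul, eval_C, eval_X, map_sub, map_mul, Complex.conj_conj,
    Complex.conj_ofReal]
  linear_combination (conj ((revStar n (Φ n)).eval ζ) * (revStar n (Φ n)).eval z
    - conj ζ * z * (conj ((Φ n).eval ζ) * (Φ n).eval z)) * hκ

end OrthogonalPolynomials

/-- Christoffel–Darboux formula for OPUC. -/
theorem stmt4 (μ : Measure ℂ) (hμ : IsNontrivialOnCircle μ)
    (Φ : ℕ → Polynomial ℂ) (hΦ : IsMonicOPUC μ Φ) :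
    ∀ (z ζ : ℂ) (n : ℕ),
      (1 - z * (starRingEnd ℂ) ζ) *
          ∑ j ∈ Finset.range (n + 1),
            (starRingEnd ℂ) ((orthonormalize μ (Φ j)).eval ζ) * (orthonormalize μ (Φ j)).eval z
        = (starRingEnd ℂ) ((revStar (n + 1) (orthonormalize μ (Φ (n + 1)))).eval ζ) *
              (revStar (n + 1) (orthonormalize μ (Φ (n + 1)))).eval z
          - (starRingEnd ℂ) ((orthonormalize μ (Φ (n + 1))).eval ζ) *
              (orthonormalize μ (Φ (n + 1))).eval z := by
  intro z ζ n
  rw [Finset.mul_sum]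
  exact Finset.sum_range_induction _ (christoffelDarbouxRHS μ Φ z ζ)
    (hΦ.christoffelDarbouxRHS_zero z ζ) (n + 1)
    fun k _ => hΦ.christoffelDarbouxRHS_succ hμ z ζ k

end
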